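/- Let Φ ∈ Mat(n×n,ℂ), n ≥ 2, with distinct eigenvalues λ_1,…,λ_m, and let Θ_Φ = (λ_1 I − Φ)·…·(λ_m I − Φ). Then for every integer k with 1 ≤ k ≤ n−1, rank((Θ_Φ)^k) = n − n·m + rank((λ_1 I − Φ)^k) + … + rank((λ_m I − Φ)^k). -/

import Mathlib

/-!
`Θ_Φ^k = p(Φ)` for `p = ∏ⱼ pⱼ`, `pⱼ = (λⱼ - X)^k`, and `(λⱼI - Φ)^k = pⱼ(Φ)`. The `pⱼ` are
pairwise coprime, so the kernel of `p(Φ)` is the direct sum of the kernels of the `pⱼ(Φ)`: the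
nullity of `Θ_Φ^k` is the sum of the nullities of the `(λⱼI - Φ)^k`, and rank–nullity converts
this into the identity of ranks.
-/

/-- The set of (distinct) eigenvalues of a complex matrix. -/
noncomputable def eigFinset {n : ℕ} (Φ : Matrix (Fin n) (Fin n) ℂ) : Finset ℂ :=
  (Matrix.charpoly Φ).roots.toFinset

/-- `Θ_Φ = (λ₁I − Φ)·…·(λ_mI − Φ)`, the product over the distinct eigenvalues of `Φ`. -/
noncomputable def thetaMat {n : ℕ} (Φ : Matrix (Fin n) (Fin n) ℂ) : Matrix (Fin n) (Fin n) ℂ :=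
  Polynomial.aeval Φ (∏ μ ∈ eigFinset Φ, (Polynomial.C μ - Polynomial.X))

open Polynomial Module LinearMap Function

lemma isCoprime_C_sub_X_pow {K : Type*} [Field K] {a b : K} (hab : a ≠ b) (k : ℕ) :
    IsCoprime ((C a - X) ^ k) ((C b - X) ^ k) := by
  have h := isCoprime_X_sub_C_of_isUnit_sub (sub_ne_zero.mpr hab).isUnit
  rw [← neg_sub X (C a), ← neg_sub X (C b)]
  exact (h.neg_left.neg_right).pow

lemma finrank_ker_aeval_prod {K V ι : Type*} [Field K] [AddCommGroup V] [Module K V]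
    [FiniteDimensional K V] (f : V →ₗ[K] V) (s : Finset ι) (p : ι → K[X])
    (hp : (s : Set ι).Pairwise (IsCoprime on p)) :
    finrank K (ker (aeval f (∏ i ∈ s, p i))) = ∑ i ∈ s, finrank K (ker (aeval f (p i))) := by
  classical
  induction s using Finset.induction_on with
  | empty =>
    rw [Finset.prod_empty, map_one, Module.End.one_eq_id, ker_id, finrank_bot, Finset.sum_empty]
  | @insert a s ha ih =>
    have hcop : IsCoprime (p a) (∏ i ∈ s, p i) :=
      IsCoprime.prod_right fun i hi =>
        hp (by simp) (by simp [hi]) (by rintro rfl; exact ha hi)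
    have hsum := Submodule.finrank_sup_add_finrank_inf_eq
      (ker (aeval f (p a))) (ker (aeval f (∏ i ∈ s, p i)))
    rw [sup_ker_aeval_eq_ker_aeval_mul_of_coprime f hcop,
      disjoint_iff.mp (disjoint_ker_aeval_of_isCoprime f hcop), finrank_bot, add_zero] at hsum
    rw [Finset.prod_insert ha, Finset.sum_insert ha, hsum,
      ih (hp.mono (by simp))]

lemma Matrix.toLin'_aeval {K ι : Type*} [Field K] [Fintype ι] [DecidableEq ι]
    (A : Matrix ι ι K) (p : K[X]) : toLin' (aeval A p) = aeval (toLin' A) p :=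
  (aeval_algHom_apply Matrix.toLinAlgEquiv' A p).symm

lemma Matrix.rank_add_finrank_ker_toLin' {K ι : Type*} [Field K] [Fintype ι] [DecidableEq ι]
    (A : Matrix ι ι K) : A.rank + finrank K (ker (toLin' A)) = Fintype.card ι := by
  rw [Matrix.rank, ← Matrix.toLin'_apply', finrank_range_add_finrank_ker,
    finrank_fintype_fun_eq_card]

lemma Matrix.rank_aeval_add_finrank_ker {K ι : Type*} [Field K] [Fintype ι] [DecidableEq ι]
    (A : Matrix ι ι K) (p : K[X]) :
    (aeval A p).rank + finrank K (ker (aeval (toLin' A) p)) = Fintype.card ι := by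
  rw [← Matrix.toLin'_aeval, Matrix.rank_add_finrank_ker_toLin']

theorem stmt8_general {n : ℕ} (Φ : Matrix (Fin n) (Fin n) ℂ)
    (m : ℕ) (hm : (eigFinset Φ).card = m) :
    ∀ k : ℕ, 1 ≤ k → k ≤ n - 1 →
      (((thetaMat Φ) ^ k).rank : ℤ) =
        (n : ℤ) - (n : ℤ) * (m : ℤ) +
          ∑ μ ∈ eigFinset Φ,
            (((μ • (1 : Matrix (Fin n) (Fin n) ℂ) - Φ) ^ k).rank : ℤ) := by
  intro k _ _
  have hθ : thetaMat Φ ^ k = aeval Φ (∏ μ ∈ eigFinset Φ, (C μ - X) ^ k) := by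
    rw [thetaMat, ← map_pow, Finset.prod_pow]
  have hfactor (μ : ℂ) :
      (μ • (1 : Matrix (Fin n) (Fin n) ℂ) - Φ) ^ k = aeval Φ ((C μ - X) ^ k) := by
    rw [map_pow, map_sub, aeval_X, aeval_C, Algebra.algebraMap_eq_smul_one]
  have hnullity := finrank_ker_aeval_prod (Matrix.toLin' Φ) (eigFinset Φ)
    (fun μ => (C μ - X) ^ k) fun _ _ _ _ hab => isCoprime_C_sub_X_pow hab k
  have hrank (p : ℂ[X]) : ((aeval Φ p).rank : ℤ) =
      n - finrank ℂ (ker (aeval (Matrix.toLin' Φ) p)) := by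
    have := Matrix.rank_aeval_add_finrank_ker Φ p
    rw [Fintype.card_fin] at this
    omega
  simp only [hθ, hfactor, hrank, hnullity, Finset.sum_sub_distrib, Finset.sum_const, hm,
    nsmul_eq_mul, Nat.cast_sum]
  ring

/-- for `n ≥ 2` and `1 ≤ k ≤ n−1`,
`rank((Θ_Φ)^k) = n − n·m + Σⱼ rank((λⱼI − Φ)^k)` where `m` is the number of distinct
eigenvalues of `Φ` (an identity of integers). -/
theorem stmt8 {n : ℕ} (hn : 2 ≤ n) (Φ : Matrix (Fin n) (Fin n) ℂ)
    (m : ℕ) (hm : (eigFinset Φ).card = m) :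
    ∀ k : ℕ, 1 ≤ k → k ≤ n - 1 →
      (((thetaMat Φ) ^ k).rank : ℤ) =
        (n : ℤ) - (n : ℤ) * (m : ℤ) +
          ∑ μ ∈ eigFinset Φ,
            (((μ • (1 : Matrix (Fin n) (Fin n) ℂ) - Φ) ^ k).rank : ℤ) :=
  stmt8_general Φ m hm
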